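/- Suppose the law ν₀ of X₀ has a density V₀ : (0,∞) → [0,∞) with ‖V₀‖_∞ := ess sup V₀ < ∞. Let L and L̄ be two solutions of the McKean–Vlasov problem (MV) associated with the same X₀, Z, f and α. Then for every r ≥ 0, |L_r − L̄_r| ≤ |α| · ‖V₀‖_∞ · sup_{s≤r} |f(L_s) − f(L̄_s)|. -/

import Mathlib

open MeasureTheory ProbabilityTheory Filter Set Function

noncomputable section

variable {Ω : Type*} [MeasureSpace Ω]

/-- The event that the particle `X_s = X₀ + Z_s − α f(L_s)` has reached `(-∞, 0]` by time `t`. -/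
def hitBy (X0 : Ω → ℝ) (Z : ℝ → Ω → ℝ) (f : ℝ → ℝ) (α : ℝ) (L : ℝ → ℝ) (t : ℝ) : Set Ω :=
  {ω | ∃ s ∈ Set.Icc (0 : ℝ) t, X0 ω + Z s ω - α * f (L s) ≤ 0}

/-- A solution of the McKean--Vlasov problem (MV). -/
def IsMVSolution (X0 : Ω → ℝ) (Z : ℝ → Ω → ℝ) (f : ℝ → ℝ) (α : ℝ) (L : ℝ → ℝ) : Prop :=
  MonotoneOn L (Set.Ici 0) ∧ L 0 = 0 ∧ (∀ t, 0 ≤ t → L t ∈ Set.Icc (0 : ℝ) 1) ∧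
  (∀ t, 0 ≤ t → ContinuousWithinAt L (Set.Ici t) t) ∧
  (∀ t, 0 ≤ t → L t = ((ℙ : Measure Ω) (hitBy X0 Z f α L t)).toReal)

/-!
The particle driven by `L` has hit `(-∞, 0]` by time `r` exactly when
`X₀ ≤ G_L(Z) := sup_{s ≤ r} (α f(L_s) − Z_s)`. By right-continuity of `L` and continuity of `Z`
this supremum may be taken over a countable grid, which makes `G_L` a measurable functional of
the path. If `α f(L_s) ≤ α f(L̄_s) + c` on `[0, r]`, then `G_L ≤ G_L̄ + c`, so the `L`-particle
can have hit `(-∞, 0]` while the `L̄`-particle has not only on the event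
`X₀ ∈ [G_L̄(Z), G_L̄(Z) + c]`. Since `X₀` is independent of `Z` and has a density bounded by
`‖V₀‖_∞`, this event has probability at most `‖V₀‖_∞ c`. Taking
`c = |α| sup_{s ≤ r} |f(L_s) − f(L̄_s)|` in both directions gives the bound.
-/

def rightDenseGrid (r : ℝ) : Set ℝ := insert r (Icc 0 r ∩ range ((↑) : ℚ → ℝ))

instance (r : ℝ) : Countable (rightDenseGrid r) :=
  (((countable_range _).mono inter_subset_right).insert r).to_subtype

lemma self_mem_rightDenseGrid (r : ℝ) : r ∈ rightDenseGrid r := mem_insert _ _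

instance (r : ℝ) : Nonempty (rightDenseGrid r) := ⟨⟨r, self_mem_rightDenseGrid r⟩⟩

lemma rightDenseGrid_subset_Icc {r : ℝ} (hr : 0 ≤ r) : rightDenseGrid r ⊆ Icc 0 r :=
  insert_subset ⟨hr, le_rfl⟩ inter_subset_left

lemma mem_closure_rightDenseGrid_inter_Ici {r s : ℝ} (hs : s ∈ Icc 0 r) :
    s ∈ closure (rightDenseGrid r ∩ Ici s) := by
  rcases hs.2.eq_or_lt with rfl | hsr
  · exact subset_closure ⟨self_mem_rightDenseGrid s, self_mem_Ici⟩
  have hsub : Ioo s r ∩ range ((↑) : ℚ → ℝ) ⊆ rightDenseGrid r ∩ Ici s :=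
    fun x ⟨hx, hxq⟩ => ⟨Or.inr ⟨⟨hs.1.trans hx.1.le, hx.2.le⟩, hxq⟩, hx.1.le⟩
  have hIoo : s ∈ closure (Ioo s r) := by
    rw [closure_Ioo hsr.ne]
    exact ⟨le_rfl, hsr.le⟩
  exact closure_mono hsub <| closure_minimal
    (Rat.denseRange_cast.open_subset_closure_inter isOpen_Ioo) isClosed_closure hIoo

def gridSup (r : ℝ) (g : ℝ → ℝ) : ℝ := ⨆ q : rightDenseGrid r, g q

section gridSup

variable {r : ℝ} {g : ℝ → ℝ}

lemma le_gridSup_of_mem (hr : 0 ≤ r) (hb : BddAbove (g '' Icc 0 r)) {q : ℝ}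
    (hq : q ∈ rightDenseGrid r) : g q ≤ gridSup r g := by
  refine le_ciSup (f := fun q : rightDenseGrid r => g q) ?_ ⟨q, hq⟩
  rw [← image_eq_range]
  exact hb.mono (image_mono (rightDenseGrid_subset_Icc hr))

lemma le_gridSup (hb : BddAbove (g '' Icc 0 r)) {s : ℝ} (hs : s ∈ Icc 0 r)
    (hg : ContinuousWithinAt g (Ici s) s) : g s ≤ gridSup r g :=
  ContinuousWithinAt.closure_le (mem_closure_rightDenseGrid_inter_Ici hs) (hg.mono inter_subset_right)
    continuousWithinAt_const fun _ hq => le_gridSup_of_mem (hs.1.trans hs.2) hb hq.1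

lemma exists_lt_of_lt_gridSup {a : ℝ} (h : a < gridSup r g) :
    ∃ q ∈ rightDenseGrid r, a < g q := by
  obtain ⟨⟨q, hq⟩, hlt⟩ := exists_lt_of_lt_ciSup (f := fun q : rightDenseGrid r => g q) h
  exact ⟨q, hq, hlt⟩

lemma gridSup_le_gridSup_add {g' : ℝ → ℝ} {c : ℝ} (hr : 0 ≤ r) (hb : BddAbove (g' '' Icc 0 r))
    (h : ∀ s ∈ Icc 0 r, g s ≤ g' s + c) : gridSup r g ≤ gridSup r g' + c :=
  ciSup_le fun q => (h q (rightDenseGrid_subset_Icc hr q.2)).trans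
    ((add_le_add_iff_right c).mpr (le_gridSup_of_mem hr hb q.2))

lemma measurable_gridSup_sub (r : ℝ) (a : ℝ → ℝ) :
    Measurable fun y : ℝ → ℝ => gridSup r fun s => a s - y s :=
  Measurable.iSup fun _ => (measurable_pi_apply _).const_sub _

end gridSup

section Path

variable {f L : ℝ → ℝ}

lemma exists_forall_abs_comp_le (hf : ContinuousOn f (Icc 0 1))
    (hL : ∀ t, 0 ≤ t → L t ∈ Icc (0 : ℝ) 1) : ∃ C, ∀ s, 0 ≤ s → |f (L s)| ≤ C := by
  obtain ⟨C, hC⟩ := isCompact_Icc.exists_bound_of_continuousOn hf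
  exact ⟨C, fun s hs => hC _ (hL s hs)⟩

lemma bddAbove_image_mul_comp_sub {z : ℝ → ℝ} (hf : ContinuousOn f (Icc 0 1))
    (hL : ∀ t, 0 ≤ t → L t ∈ Icc (0 : ℝ) 1) (hz : Continuous z) (α r : ℝ) :
    BddAbove ((fun s => α * f (L s) - z s) '' Icc 0 r) := by
  obtain ⟨C, hC⟩ := exists_forall_abs_comp_le hf hL
  obtain ⟨m, hm⟩ := (isCompact_Icc (a := 0) (b := r)).bddBelow_image hz.continuousOn
  refine ⟨|α| * C - m, ?_⟩
  rintro _ ⟨s, hs, rfl⟩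
  have hαf : α * f (L s) ≤ |α| * C := calc
    α * f (L s) ≤ |α * f (L s)| := le_abs_self _
    _ = |α| * |f (L s)| := abs_mul _ _
    _ ≤ |α| * C := mul_le_mul_of_nonneg_left (hC s hs.1) (abs_nonneg α)
  linarith [hm ⟨s, hs, rfl⟩]

lemma continuousWithinAt_mul_comp_sub {z : ℝ → ℝ} {s : ℝ} (hf : ContinuousOn f (Icc 0 1))
    (hL : ∀ t, 0 ≤ t → L t ∈ Icc (0 : ℝ) 1) (hs : 0 ≤ s)
    (hLs : ContinuousWithinAt L (Ici s) s) (hz : Continuous z) (α : ℝ) :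
    ContinuousWithinAt (fun t => α * f (L t) - z t) (Ici s) s :=
  (((hf _ (hL s hs)).comp hLs fun _ hu => hL _ (hs.trans hu)).const_mul α).sub
    hz.continuousWithinAt

end Path

lemma withDensity_ofReal_Icc_le (V : ℝ → ℝ) (a c : ℝ) :
    volume.withDensity (fun x => ENNReal.ofReal (V x)) (Icc a (a + c))
      ≤ eLpNorm V ⊤ volume * ENNReal.ofReal c := by
  have hV : ∀ᵐ x ∂volume, ENNReal.ofReal (V x) ≤ eLpNorm V ⊤ volume := by
    filter_upwards [ae_le_eLpNormEssSup (f := V) (μ := volume)] with x hx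
    rw [eLpNorm_exponent_top]
    exact (Real.ofReal_le_enorm _).trans hx
  rw [withDensity_apply _ measurableSet_Icc]
  calc ∫⁻ x in Icc a (a + c), ENNReal.ofReal (V x)
      ≤ ∫⁻ _ in Icc a (a + c), eLpNorm V ⊤ volume := lintegral_mono_ae (ae_restrict_of_ae hV)
    _ = eLpNorm V ⊤ volume * ENNReal.ofReal c := by
      rw [setLIntegral_const, Real.volume_Icc, add_sub_cancel_left]

/-- By independence and Fubini, for each frozen value `y` of `Y` the event is `X ∈ [G y, G y + c]`. -/
lemma measure_mem_Icc_le_of_indepFun {S β : Type*} [MeasurableSpace S] [MeasurableSpace β]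
    {μ : Measure S} [IsProbabilityMeasure μ] {X : S → ℝ} {Y : S → β} (hX : Measurable X)
    (hY : Measurable Y) (hXY : IndepFun X Y μ) {G : β → ℝ} (hG : Measurable G) (c : ℝ)
    {δ : ENNReal} (hδ : ∀ a, μ.map X (Icc a (a + c)) ≤ δ) :
    μ {ω | X ω ∈ Icc (G (Y ω)) (G (Y ω) + c)} ≤ δ := by
  set T : Set (β × ℝ) := {p | p.2 ∈ Icc (G p.1) (G p.1 + c)}
  have hT : MeasurableSet T :=
    (measurableSet_le (hG.comp measurable_fst) measurable_snd).inter
      (measurableSet_le measurable_snd ((hG.comp measurable_fst).add_const c))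
  have hmap : μ.map (fun ω => (Y ω, X ω)) = (μ.map Y).prod (μ.map X) :=
    (indepFun_iff_map_prod_eq_prod_map_map hY.aemeasurable hX.aemeasurable).mp hXY.symm
  have : IsProbabilityMeasure (μ.map Y) := Measure.isProbabilityMeasure_map hY.aemeasurable
  change μ ((fun ω => (Y ω, X ω)) ⁻¹' T) ≤ δ
  rw [← Measure.map_apply (hY.prodMk hX) hT, hmap, Measure.prod_apply hT]
  calc ∫⁻ y, μ.map X (Prod.mk y ⁻¹' T) ∂μ.map Y ≤ ∫⁻ _, δ ∂μ.map Y := lintegral_mono fun y => hδ (G y)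
    _ = δ := by simp

section Solution

variable {X0 : Ω → ℝ} {Z : ℝ → Ω → ℝ} {f : ℝ → ℝ} {α : ℝ} {L Lbar : ℝ → ℝ} {r : ℝ}

lemma IsMVSolution.hitBy_subset (hf : ContinuousOn f (Icc 0 1))
    (hZcont : ∀ ω, Continuous fun t => Z t ω) (hL : IsMVSolution X0 Z f α L) (r : ℝ) :
    hitBy X0 Z f α L r ⊆ {ω | X0 ω ≤ gridSup r fun s => α * f (L s) - Z s ω} := by
  rintro ω ⟨s, hs, hhit⟩
  calc X0 ω ≤ α * f (L s) - Z s ω := by linarith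
    _ ≤ _ := le_gridSup (bddAbove_image_mul_comp_sub hf hL.2.2.1 (hZcont ω) α r) hs
      (continuousWithinAt_mul_comp_sub hf hL.2.2.1 hs.1 (hL.2.2.2.1 s hs.1) (hZcont ω) α)

theorem IsMVSolution.measure_hitBy_le [IsProbabilityMeasure (ℙ : Measure Ω)]
    (hX0meas : Measurable X0) (hZmeas : ∀ t, Measurable (Z t))
    (hZcont : ∀ ω, Continuous fun t => Z t ω)
    (hindep : IndepFun X0 (fun ω => fun t => Z t ω) ℙ) (hf : ContinuousOn f (Icc 0 1))
    {V₀ : ℝ → ℝ} (hdens : Measure.map X0 (ℙ : Measure Ω)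
      = volume.withDensity fun x => ENNReal.ofReal (V₀ x))
    (hL : IsMVSolution X0 Z f α L) (hLbar : IsMVSolution X0 Z f α Lbar) (hr : 0 ≤ r) {c : ℝ}
    (hc : ∀ s ∈ Icc 0 r, α * f (L s) - α * f (Lbar s) ≤ c) :
    ℙ (hitBy X0 Z f α L r)
      ≤ ℙ (hitBy X0 Z f α Lbar r) + eLpNorm V₀ ⊤ volume * ENNReal.ofReal c := by
  set G : (ℝ → ℝ) → ℝ := fun y => gridSup r fun s => α * f (Lbar s) - y s
  have hsub : hitBy X0 Z f α L r ⊆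
      hitBy X0 Z f α Lbar r ∪ {ω | X0 ω ∈ Icc (G fun t => Z t ω) (G (fun t => Z t ω) + c)} := by
    intro ω hω
    rcases lt_or_ge (X0 ω) (G fun t => Z t ω) with hlt | hge
    · obtain ⟨s, hs, hlt⟩ := exists_lt_of_lt_gridSup hlt
      exact Or.inl ⟨s, rightDenseGrid_subset_Icc hr hs, by linarith⟩
    refine Or.inr ⟨hge, (hL.hitBy_subset hf hZcont r hω).trans ?_⟩
    exact gridSup_le_gridSup_add hr
      (bddAbove_image_mul_comp_sub hf hLbar.2.2.1 (hZcont ω) α r)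
      fun s hs => by linarith [hc s hs]
  have hnear := measure_mem_Icc_le_of_indepFun hX0meas (measurable_pi_lambda _ hZmeas) hindep
    (G := G) (measurable_gridSup_sub r fun s => α * f (Lbar s)) c
    fun a => hdens ▸ withDensity_ofReal_Icc_le V₀ a c
  exact (measure_mono hsub).trans ((measure_union_le _ _).trans (add_le_add le_rfl hnear))

theorem IsMVSolution.sub_le [IsProbabilityMeasure (ℙ : Measure Ω)]
    (hX0meas : Measurable X0) (hZmeas : ∀ t, Measurable (Z t))
    (hZcont : ∀ ω, Continuous fun t => Z t ω)
    (hindep : IndepFun X0 (fun ω => fun t => Z t ω) ℙ) (hf : ContinuousOn f (Icc 0 1))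
    {V₀ : ℝ → ℝ} (hdens : Measure.map X0 (ℙ : Measure Ω)
      = volume.withDensity fun x => ENNReal.ofReal (V₀ x))
    (hV₀bdd : MemLp V₀ ⊤ volume)
    (hL : IsMVSolution X0 Z f α L) (hLbar : IsMVSolution X0 Z f α Lbar) (hr : 0 ≤ r) {c : ℝ}
    (hc0 : 0 ≤ c) (hc : ∀ s ∈ Icc 0 r, α * f (L s) - α * f (Lbar s) ≤ c) :
    L r - Lbar r ≤ (eLpNorm V₀ ⊤ volume).toReal * c := by
  have hKc : eLpNorm V₀ ⊤ volume * ENNReal.ofReal c ≠ ⊤ :=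
    ENNReal.mul_ne_top hV₀bdd.2.ne ENNReal.ofReal_ne_top
  have h := ENNReal.toReal_mono (ENNReal.add_ne_top.mpr ⟨measure_ne_top _ _, hKc⟩)
    (hL.measure_hitBy_le hX0meas hZmeas hZcont hindep hf hdens hLbar hr hc)
  rw [ENNReal.toReal_add (measure_ne_top _ _) hKc, ENNReal.toReal_mul,
    ENNReal.toReal_ofReal hc0] at h
  rw [hL.2.2.2.2 r hr, hLbar.2.2.2.2 r hr]
  linarith

end Solution

theorem mv_density_stability
    (hprob : IsProbabilityMeasure (ℙ : Measure Ω))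
    (X0 : Ω → ℝ) (hX0meas : Measurable X0)
    (Z : ℝ → Ω → ℝ) (hZmeas : ∀ t, Measurable (Z t))
    (hZcont : ∀ ω, Continuous fun t => Z t ω)
    (hindep : IndepFun X0 (fun ω => fun t => Z t ω) ℙ)
    (f : ℝ → ℝ) (hf : ContinuousOn f (Set.Icc 0 1)) (α : ℝ)
    (V₀ : ℝ → ℝ)
    (hdens : Measure.map X0 (ℙ : Measure Ω)
      = volume.withDensity fun x => ENNReal.ofReal (V₀ x))
    (hV₀bdd : MemLp V₀ ⊤ volume)
    (L Lbar : ℝ → ℝ)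
    (hL : IsMVSolution X0 Z f α L) (hLbar : IsMVSolution X0 Z f α Lbar)
    (r : ℝ) (hr : 0 ≤ r) :
    |L r - Lbar r| ≤
      |α| * (eLpNorm V₀ ⊤ volume).toReal *
        sSup ((fun s => |f (L s) - f (Lbar s)|) '' Set.Icc (0 : ℝ) r) := by
  set S := sSup ((fun s => |f (L s) - f (Lbar s)|) '' Icc (0 : ℝ) r)
  obtain ⟨C, hC⟩ := exists_forall_abs_comp_le hf hL.2.2.1
  obtain ⟨Cbar, hCbar⟩ := exists_forall_abs_comp_le hf hLbar.2.2.1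
  have hbdd : BddAbove ((fun s => |f (L s) - f (Lbar s)|) '' Icc (0 : ℝ) r) := by
    refine ⟨C + Cbar, ?_⟩
    rintro _ ⟨s, hs, rfl⟩
    exact (abs_sub _ _).trans (add_le_add (hC s hs.1) (hCbar s hs.1))
  have hS0 : 0 ≤ S := (abs_nonneg _).trans (le_csSup hbdd ⟨0, ⟨le_rfl, hr⟩, rfl⟩)
  have hdiff : ∀ s ∈ Icc 0 r, |α * f (L s) - α * f (Lbar s)| ≤ |α| * S := fun s hs => by
    rw [← mul_sub, abs_mul]
    exact mul_le_mul_of_nonneg_left (le_csSup hbdd ⟨s, hs, rfl⟩) (abs_nonneg α)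
  have hαS := mul_nonneg (abs_nonneg α) hS0
  rw [abs_sub_le_iff, mul_comm |α|, mul_assoc]
  exact ⟨hL.sub_le hX0meas hZmeas hZcont hindep hf hdens hV₀bdd hLbar hr hαS
      fun s hs => (abs_sub_le_iff.mp (hdiff s hs)).1,
    hLbar.sub_le hX0meas hZmeas hZcont hindep hf hdens hV₀bdd hL hr hαS
      fun s hs => (abs_sub_le_iff.mp (hdiff s hs)).2⟩
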